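/- The coproduct of EP[R(x)] is compatible with the ΦL-relation: under the hypotheses of EP[R(x)], ΔΦ(x₁)₁ ΔL(x₂)₂ = R(q^{(c₁+c₂)/2} x₁/x₂)^{-1} ΔL(x₂)₂ ΔΦ(x₁)₁. -/
import Mathlib


open scoped TensorProduct

section Aux
variable {M : Type} [AddCommMonoid M] [Module ℂ M] {ι : Type} [Fintype ι] [DecidableEq ι]

lemma EPaux_inv_expand (R Rinv : ι → ι → ℂ)
    (hR : ∀ p q : ι, (∑ r : ι, Rinv p r * R r q) = if p = q then 1 else 0)
    (X W : ι → M) (hW : ∀ j : ι, ∑ p : ι, R j p • X p = W j) (s : ι) :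
    X s = ∑ j : ι, Rinv s j • W j := by
  have h1 : ∑ j : ι, Rinv s j • W j = ∑ j : ι, ∑ p : ι, (Rinv s j * R j p) • X p := by
    simp_rw [← hW, Finset.smul_sum, smul_smul]
  rw [h1, Finset.sum_comm]
  simp_rw [← Finset.sum_smul, hR]
  simp

lemma EPaux_contract (R Rinv : ι → ι → ℂ)
    (hR : ∀ p q : ι, (∑ r : ι, R p r * Rinv r q) = if p = q then 1 else 0)
    (Y : ι → M) (q : ι) :
    ∑ r : ι, Rinv r q • ∑ p : ι, R p r • Y p = Y q := by
  have h1 : ∀ r, Rinv r q • ∑ p : ι, R p r • Y p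
      = ∑ p : ι, (R p r * Rinv r q) • Y p := by
    intro r; rw [Finset.smul_sum]; simp_rw [smul_smul, mul_comm]
  simp_rw [h1]
  rw [Finset.sum_comm]
  simp_rw [← Finset.sum_smul, hR]
  simp

end Aux

/-- `ΔΦᵢ(x) = Φᵢ(x)⊗1 + Σⱼ L_{ij}(x q^{c₁/2}) ⊗ Φⱼ(x q^{c₁})`, with `u = q^{c/2}`. -/
noncomputable def DPhi {n : ℕ} {A : Type} [Ring A] [Algebra ℂ A]
    (Φ : Fin n → ℂ → A) (L : Fin n → Fin n → ℂ → A) (u : ℂ) (i : Fin n) (x : ℂ) :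
    A ⊗[ℂ] A :=
  Φ i x ⊗ₜ[ℂ] (1 : A) + ∑ a : Fin n, L i a (x * u) ⊗ₜ[ℂ] Φ a (x * u ^ 2)

/-- `ΔL_{ij}(x) = Σₖ L_{ik}(x q^{-c₂/2}) ⊗ L_{kj}(x q^{c₁/2})`, with `u = q^{c/2}`. -/
noncomputable def DL {n : ℕ} {A : Type} [Ring A] [Algebra ℂ A]
    (L : Fin n → Fin n → ℂ → A) (u : ℂ) (i j : Fin n) (x : ℂ) : A ⊗[ℂ] A :=
  ∑ k : Fin n, L i k (x * u⁻¹) ⊗ₜ[ℂ] L k j (x * u)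

/-- Compatibility of the coproduct of `EP[R(x)]` with the `ΦL`-relation: under the
defining relations of `EP[R(x)]` (componentwise, `R` acting on the auxiliary space),
`ΔΦ(x₁)₁ ΔL(x₂)₂ = R(q^{(c₁+c₂)/2} x₁/x₂)⁻¹ ΔL(x₂)₂ ΔΦ(x₁)₁`,
where `q^{(c₁+c₂)/2}` is modelled by `u²`. -/
theorem EP_coproduct_PhiL {n : ℕ} {A : Type} [Ring A] [Algebra ℂ A]
    (R Rinv : ℂ → Fin n × Fin n → Fin n × Fin n → ℂ)
    (Φ : Fin n → ℂ → A) (L : Fin n → Fin n → ℂ → A) (u : ℂ)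
    (hRinv : ∀ (z : ℂ) (p q : Fin n × Fin n),
      (∑ r : Fin n × Fin n, R z p r * Rinv z r q) = (if p = q then 1 else 0)
      ∧ (∑ r : Fin n × Fin n, Rinv z p r * R z r q) = (if p = q then 1 else 0))
    (hZZ : ∀ (x₁ x₂ : ℂ) (i j : Fin n),
      ∑ p : Fin n × Fin n, R (x₁ / x₂) (i, j) p • (Φ p.1 x₁ * Φ p.2 x₂)
        = Φ j x₂ * Φ i x₁)
    (hPL : ∀ (x₁ x₂ : ℂ) (i k l : Fin n),
      Φ i x₁ * L k l x₂
        = ∑ p : Fin n × Fin n, Rinv (u * x₁ / x₂) (i, k) p • (L p.2 l x₂ * Φ p.1 x₁))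
    (hLL : ∀ (x₁ x₂ : ℂ) (i j k l : Fin n),
      ∑ p : Fin n × Fin n, R (x₁ / x₂) (i, j) p • (L p.1 k x₁ * L p.2 l x₂)
        = ∑ p : Fin n × Fin n, R (x₁ / x₂) p (k, l) • (L j p.2 x₂ * L i p.1 x₁))
    (x₁ x₂ : ℂ) (i k l : Fin n) :
    DPhi Φ L u i x₁ * DL L u k l x₂
      = ∑ p : Fin n × Fin n,
          Rinv (u ^ 2 * x₁ / x₂) (i, k) p • (DL L u p.2 l x₂ * DPhi Φ L u p.1 x₁) := by
  classical
  set z : ℂ := u ^ 2 * x₁ / x₂ with hz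
  -- spectral parameter identities
  have hz1 : u * x₁ / (x₂ * u⁻¹) = z := by
    rcases eq_or_ne u 0 with h | h
    · simp [h, hz]
    rcases eq_or_ne x₂ 0 with h2 | h2
    · simp [h2, hz]
    rw [hz]; field_simp
  have hz2 : u * (x₁ * u ^ 2) / (x₂ * u) = z := by
    rcases eq_or_ne u 0 with h | h
    · simp [h, hz]
    rcases eq_or_ne x₂ 0 with h2 | h2
    · simp [h2, hz]
    rw [hz]; field_simp
  have hz3 : x₁ * u / (x₂ * u⁻¹) = z := by
    rcases eq_or_ne u 0 with h | h
    · simp [h, hz]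
    rcases eq_or_ne x₂ 0 with h2 | h2
    · simp [h2, hz]
    rw [hz]; field_simp
  -- key contraction identity in A
  have key : ∀ q : Fin n × Fin n,
      (∑ r : Fin n × Fin n, Rinv z r q • (L i r.1 (x₁ * u) * L k r.2 (x₂ * u⁻¹)))
        = ∑ s : Fin n × Fin n,
            Rinv z (i, k) s • (L s.2 q.2 (x₂ * u⁻¹) * L s.1 q.1 (x₁ * u)) := by
    intro q
    have hW : ∀ j r : Fin n × Fin n,
        ∑ p : Fin n × Fin n, R z j p • (L p.1 r.1 (x₁ * u) * L p.2 r.2 (x₂ * u⁻¹))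
          = ∑ p : Fin n × Fin n, R z p r • (L j.2 p.2 (x₂ * u⁻¹) * L j.1 p.1 (x₁ * u)) := by
      intro j r
      have := hLL (x₁ * u) (x₂ * u⁻¹) j.1 j.2 r.1 r.2
      rw [hz3] at this
      simpa using this
    have hX : ∀ r : Fin n × Fin n,
        L i r.1 (x₁ * u) * L k r.2 (x₂ * u⁻¹)
          = ∑ j : Fin n × Fin n, Rinv z (i, k) j •
              ∑ p : Fin n × Fin n, R z p r • (L j.2 p.2 (x₂ * u⁻¹) * L j.1 p.1 (x₁ * u)) := by
      intro r
      exact EPaux_inv_expand (R z) (Rinv z) (fun p q => (hRinv z p q).2)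
        (fun s => L s.1 r.1 (x₁ * u) * L s.2 r.2 (x₂ * u⁻¹))
        (fun j => ∑ p : Fin n × Fin n, R z p r • (L j.2 p.2 (x₂ * u⁻¹) * L j.1 p.1 (x₁ * u)))
        (fun j => hW j r) (i, k)
    calc (∑ r : Fin n × Fin n, Rinv z r q • (L i r.1 (x₁ * u) * L k r.2 (x₂ * u⁻¹)))
        = ∑ r : Fin n × Fin n, ∑ j : Fin n × Fin n,
            Rinv z (i, k) j • Rinv z r q •
              ∑ p : Fin n × Fin n, R z p r • (L j.2 p.2 (x₂ * u⁻¹) * L j.1 p.1 (x₁ * u)) := by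
          refine Finset.sum_congr rfl fun r _ => ?_
          rw [hX r, Finset.smul_sum]
          refine Finset.sum_congr rfl fun j _ => ?_
          rw [smul_smul, smul_smul, mul_comm]
      _ = ∑ j : Fin n × Fin n, Rinv z (i, k) j •
            ∑ r : Fin n × Fin n, Rinv z r q •
              ∑ p : Fin n × Fin n, R z p r • (L j.2 p.2 (x₂ * u⁻¹) * L j.1 p.1 (x₁ * u)) := by
          rw [Finset.sum_comm]
          simp_rw [Finset.smul_sum]
      _ = ∑ s : Fin n × Fin n,
            Rinv z (i, k) s • (L s.2 q.2 (x₂ * u⁻¹) * L s.1 q.1 (x₁ * u)) := by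
          refine Finset.sum_congr rfl fun j _ => ?_
          congr 1
          exact EPaux_contract (R z) (Rinv z) (fun p q => (hRinv z p q).1)
            (fun p => L j.2 p.2 (x₂ * u⁻¹) * L j.1 p.1 (x₁ * u)) q
  -- the two normal-form pieces
  set N1 : A ⊗[ℂ] A := ∑ p : Fin n × Fin n, Rinv z (i, k) p •
      ∑ m : Fin n, (L p.2 m (x₂ * u⁻¹) * Φ p.1 x₁) ⊗ₜ[ℂ] L m l (x₂ * u) with hN1
  set N2 : A ⊗[ℂ] A := ∑ p : Fin n × Fin n, Rinv z (i, k) p •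
      ∑ q : Fin n × Fin n, (L p.2 q.2 (x₂ * u⁻¹) * L p.1 q.1 (x₁ * u)) ⊗ₜ[ℂ]
        (L q.2 l (x₂ * u) * Φ q.1 (x₁ * u ^ 2)) with hN2
  have rhs_eq : (∑ p : Fin n × Fin n,
      Rinv z (i, k) p • (DL L u p.2 l x₂ * DPhi Φ L u p.1 x₁)) = N1 + N2 := by
    rw [hN1, hN2, ← Finset.sum_add_distrib]
    refine Finset.sum_congr rfl fun p _ => ?_
    rw [← smul_add]
    congr 1
    rw [DL, DPhi]
    simp only [Finset.sum_mul, mul_add, Finset.mul_sum,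
      Algebra.TensorProduct.tmul_mul_tmul, mul_one]
    congr 1
    rw [Fintype.sum_prod_type]
  have lhs_eq : DPhi Φ L u i x₁ * DL L u k l x₂ = N1 + N2 := by
    rw [DPhi, DL]
    simp only [add_mul, Finset.sum_mul, Finset.mul_sum,
      Algebra.TensorProduct.tmul_mul_tmul, one_mul]
    rw [Finset.sum_add_distrib, hN1, hN2]
    congr 1
    · -- first piece
      calc ∑ m : Fin n, (Φ i x₁ * L k m (x₂ * u⁻¹)) ⊗ₜ[ℂ] L m l (x₂ * u)
          = ∑ m : Fin n, ∑ p : Fin n × Fin n, Rinv z (i, k) p •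
              ((L p.2 m (x₂ * u⁻¹) * Φ p.1 x₁) ⊗ₜ[ℂ] L m l (x₂ * u)) := by
            refine Finset.sum_congr rfl fun m _ => ?_
            rw [hPL x₁ (x₂ * u⁻¹) i k m, hz1, TensorProduct.sum_tmul]
            exact Finset.sum_congr rfl fun p _ => (TensorProduct.smul_tmul' _ _ _).symm
        _ = _ := by
            rw [Finset.sum_comm]
            exact Finset.sum_congr rfl fun p _ => (Finset.smul_sum).symm
    · -- second piece
      calc ∑ m : Fin n, ∑ a : Fin n,
            (L i a (x₁ * u) * L k m (x₂ * u⁻¹)) ⊗ₜ[ℂ] (Φ a (x₁ * u ^ 2) * L m l (x₂ * u))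
          = ∑ m : Fin n, ∑ a : Fin n, ∑ q : Fin n × Fin n, Rinv z (a, m) q •
              ((L i a (x₁ * u) * L k m (x₂ * u⁻¹)) ⊗ₜ[ℂ]
                (L q.2 l (x₂ * u) * Φ q.1 (x₁ * u ^ 2))) := by
            refine Finset.sum_congr rfl fun m _ => Finset.sum_congr rfl fun a _ => ?_
            rw [hPL (x₁ * u ^ 2) (x₂ * u) a m l, hz2, TensorProduct.tmul_sum]
            exact Finset.sum_congr rfl fun q _ => TensorProduct.tmul_smul _ _ _
        _ = ∑ q : Fin n × Fin n, ∑ r : Fin n × Fin n, Rinv z r q •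
              ((L i r.1 (x₁ * u) * L k r.2 (x₂ * u⁻¹)) ⊗ₜ[ℂ]
                (L q.2 l (x₂ * u) * Φ q.1 (x₁ * u ^ 2))) := by
            have hsp : ∀ q : Fin n × Fin n,
                (∑ r : Fin n × Fin n, Rinv z r q •
                    ((L i r.1 (x₁ * u) * L k r.2 (x₂ * u⁻¹)) ⊗ₜ[ℂ]
                      (L q.2 l (x₂ * u) * Φ q.1 (x₁ * u ^ 2))))
                  = ∑ m : Fin n, ∑ a : Fin n, Rinv z (a, m) q •
                      ((L i a (x₁ * u) * L k m (x₂ * u⁻¹)) ⊗ₜ[ℂ]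
                        (L q.2 l (x₂ * u) * Φ q.1 (x₁ * u ^ 2))) :=
              fun q => Fintype.sum_prod_type_right _
            simp_rw [hsp]
            have hc : ∀ m : Fin n,
                (∑ a : Fin n, ∑ q : Fin n × Fin n, Rinv z (a, m) q •
                    ((L i a (x₁ * u) * L k m (x₂ * u⁻¹)) ⊗ₜ[ℂ]
                      (L q.2 l (x₂ * u) * Φ q.1 (x₁ * u ^ 2))))
                  = ∑ q : Fin n × Fin n, ∑ a : Fin n, Rinv z (a, m) q •
                      ((L i a (x₁ * u) * L k m (x₂ * u⁻¹)) ⊗ₜ[ℂ]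
                        (L q.2 l (x₂ * u) * Φ q.1 (x₁ * u ^ 2))) :=
              fun m => Finset.sum_comm
            simp_rw [hc]
            rw [Finset.sum_comm]
        _ = ∑ q : Fin n × Fin n,
              (∑ r : Fin n × Fin n, Rinv z r q • (L i r.1 (x₁ * u) * L k r.2 (x₂ * u⁻¹)))
                ⊗ₜ[ℂ] (L q.2 l (x₂ * u) * Φ q.1 (x₁ * u ^ 2)) := by
            refine Finset.sum_congr rfl fun q _ => ?_
            rw [TensorProduct.sum_tmul]
            exact Finset.sum_congr rfl fun r _ => TensorProduct.smul_tmul' _ _ _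
        _ = ∑ q : Fin n × Fin n,
              (∑ s : Fin n × Fin n, Rinv z (i, k) s •
                  (L s.2 q.2 (x₂ * u⁻¹) * L s.1 q.1 (x₁ * u)))
                ⊗ₜ[ℂ] (L q.2 l (x₂ * u) * Φ q.1 (x₁ * u ^ 2)) := by
            exact Finset.sum_congr rfl fun q _ => by rw [key q]
        _ = _ := by
            simp_rw [TensorProduct.sum_tmul, ← TensorProduct.smul_tmul']
            rw [Finset.sum_comm]
            exact Finset.sum_congr rfl fun s _ => (Finset.smul_sum).symm
  rw [lhs_eq, rhs_eq]
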